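/- For any real symmetric d × d matrices X, Y and λ > 0, with A(M) = √(MᵀM + (4/λ)I), the ratio ‖A(X) − A(Y)‖_F² / ‖X − Y‖_F² (for X ≠ Y) is bounded above by the maximum over eigenvalue pairs (x, y) of X and Y with x ≠ y of (√(x² + 4/λ) − √(y² + 4/λ))² / (x − y)². -/

import Mathlib

open scoped Matrix

/-- Frobenius norm of a matrix. -/
noncomputable def frobNorm {d : ℕ} (A : Matrix (Fin d) (Fin d) ℝ) : ℝ :=
  Real.sqrt (∑ i, ∑ j, (A i j) ^ 2)

/-- The positive semidefinite square root of a positive semidefinite matrix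
(the definition of Mathlib of December 2024, since removed from Mathlib). -/
noncomputable def Matrix.PosSemidef.sqrt {n : Type*} [Fintype n] [DecidableEq n]
    {A : Matrix n n ℝ} (hA : A.PosSemidef) : Matrix n n ℝ :=
  hA.1.eigenvectorUnitary.1 * Matrix.diagonal (hA.1.eigenvalues · |>.sqrt) *
  (star hA.1.eigenvectorUnitary : Matrix n n ℝ)

open Matrix

variable {d : ℕ}

noncomputable def sumSq (M : Matrix (Fin d) (Fin d) ℝ) : ℝ := ∑ i, ∑ j, (M i j)^2

lemma sumSq_eq_trace (M : Matrix (Fin d) (Fin d) ℝ) : sumSq M = (Mᵀ * M).trace := by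
  simp only [sumSq, trace, Matrix.mul_apply, Matrix.diag, transpose_apply, sq]
  rw [Finset.sum_comm]

lemma sumSq_conj (U V M : Matrix (Fin d) (Fin d) ℝ) (hU : U * Uᵀ = 1) (hV : V * Vᵀ = 1) :
    sumSq (Uᵀ * M * V) = sumSq M := by
  rw [sumSq_eq_trace, sumSq_eq_trace]
  have h1 : (Uᵀ * M * V)ᵀ * (Uᵀ * M * V) = Vᵀ * (Mᵀ * M) * V := by
    rw [transpose_mul, transpose_mul, transpose_transpose]
    calc Vᵀ * (Mᵀ * U) * (Uᵀ * M * V)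
        = Vᵀ * Mᵀ * (U * Uᵀ) * (M * V) := by noncomm_ring
      _ = Vᵀ * (Mᵀ * M) * V := by rw [hU]; noncomm_ring
  rw [h1, trace_mul_cycle, ← Matrix.mul_assoc, hV, Matrix.one_mul]

lemma conj_diag_mul (U : Matrix (Fin d) (Fin d) ℝ) (hU : Uᵀ * U = 1) (f g : Fin d → ℝ) :
    (U * diagonal f * Uᵀ) * (U * diagonal g * Uᵀ) =
      U * diagonal (fun i => f i * g i) * Uᵀ := by
  calc (U * diagonal f * Uᵀ) * (U * diagonal g * Uᵀ)
      = U * (diagonal f * (Uᵀ * U) * diagonal g) * Uᵀ := by noncomm_ring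
    _ = U * diagonal (fun i => f i * g i) * Uᵀ := by
        rw [hU, Matrix.mul_one, diagonal_mul_diagonal]

lemma star_coe_eq_transpose (U : Matrix (Fin d) (Fin d) ℝ) :
    star U = Uᵀ := by
  rw [Matrix.star_eq_conjTranspose, conjTranspose_eq_transpose_of_trivial]

lemma spectral_real (X : Matrix (Fin d) (Fin d) ℝ) (hX : X.IsHermitian) :
    X = (hX.eigenvectorUnitary : Matrix (Fin d) (Fin d) ℝ) * diagonal hX.eigenvalues *
      (hX.eigenvectorUnitary : Matrix (Fin d) (Fin d) ℝ)ᵀ := by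
  conv_lhs => rw [hX.spectral_theorem]
  rw [Unitary.conjStarAlgAut_apply, star_coe_eq_transpose]
  congr 2

open MatrixOrder in
lemma psd_sqrt_eq (M B : Matrix (Fin d) (Fin d) ℝ) (hP : M.PosSemidef) (hB : B.PosSemidef)
    (h : B ^ 2 = M) : hP.sqrt = B := by
  have e1 : hP.sqrt = cfc Real.sqrt M := by
    rw [hP.1.cfc_eq, Matrix.IsHermitian.cfc, Unitary.conjStarAlgAut_apply]
    rfl
  rw [e1, ← cfcₙ_eq_cfc (hf0 := Real.sqrt_zero), ← CFC.sqrt_eq_real_sqrt M hP.nonneg]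
  exact CFC.sqrt_unique (by rw [← sq, h]) hB.nonneg

lemma sqrt_diag (X : Matrix (Fin d) (Fin d) ℝ) (hX : X.IsHermitian) (c : ℝ) (hc : 0 ≤ c)
    (hP : (Xᵀ * X + c • 1).PosSemidef) :
    hP.sqrt = (hX.eigenvectorUnitary : Matrix (Fin d) (Fin d) ℝ) *
      diagonal (fun i => Real.sqrt (hX.eigenvalues i ^ 2 + c)) *
      (hX.eigenvectorUnitary : Matrix (Fin d) (Fin d) ℝ)ᵀ := by
  set U := (hX.eigenvectorUnitary : Matrix (Fin d) (Fin d) ℝ) with hUdef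
  have hU1 : U * Uᵀ = 1 := by
    rw [← star_coe_eq_transpose]
    exact (Matrix.mem_unitaryGroup_iff).mp hX.eigenvectorUnitary.2
  have hU2 : Uᵀ * U = 1 := by
    rw [← star_coe_eq_transpose]
    exact (Matrix.mem_unitaryGroup_iff').mp hX.eigenvectorUnitary.2
  set B := U * diagonal (fun i => Real.sqrt (hX.eigenvalues i ^ 2 + c)) * Uᵀ with hBdef
  have hBpsd : B.PosSemidef := by
    have hD : (diagonal (fun i => Real.sqrt (hX.eigenvalues i ^ 2 + c))).PosSemidef :=
      Matrix.PosSemidef.diagonal (fun i => Real.sqrt_nonneg _)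
    have := hD.mul_mul_conjTranspose_same U
    rwa [conjTranspose_eq_transpose_of_trivial] at this
  have hXt : Xᵀ = X := by
    rw [← conjTranspose_eq_transpose_of_trivial, hX.eq]
  have hBsq : B ^ 2 = Xᵀ * X + c • 1 := by
    rw [pow_two, hBdef, conj_diag_mul U hU2]
    have h1 : Xᵀ * X = U * diagonal (fun i => hX.eigenvalues i * hX.eigenvalues i) * Uᵀ := by
      rw [hXt]
      conv_lhs => rw [spectral_real X hX]
      exact conj_diag_mul U hU2 _ _
    have h2 : (c • (1 : Matrix (Fin d) (Fin d) ℝ)) =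
        U * diagonal (fun _ => c) * Uᵀ := by
      rw [← smul_one_eq_diagonal, mul_smul_comm, Matrix.mul_one, smul_mul_assoc, hU1]
    rw [h1, h2, ← Matrix.add_mul, ← Matrix.mul_add, diagonal_add]
    have heq : (fun i => Real.sqrt (hX.eigenvalues i ^ 2 + c) *
        Real.sqrt (hX.eigenvalues i ^ 2 + c)) =
        fun i => hX.eigenvalues i * hX.eigenvalues i + c := by
      funext i
      rw [Real.mul_self_sqrt (by positivity : (0:ℝ) ≤ hX.eigenvalues i ^ 2 + c)]
      ring
    rw [heq]
  exact psd_sqrt_eq _ B hP hBpsd hBsq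

lemma frobNorm_sq (M : Matrix (Fin d) (Fin d) ℝ) : frobNorm M ^ 2 = sumSq M :=
  Real.sq_sqrt (by positivity)

lemma sumSq_pos (M : Matrix (Fin d) (Fin d) ℝ) (h : M ≠ 0) : 0 < sumSq M := by
  obtain ⟨i, j, hij⟩ : ∃ i j, M i j ≠ 0 := by
    by_contra h'
    push_neg at h'
    exact h (by ext i j; simp [h' i j])
  exact Finset.sum_pos' (fun _ _ => Finset.sum_nonneg fun _ _ => sq_nonneg _)
    ⟨i, Finset.mem_univ i, Finset.sum_pos' (fun _ _ => sq_nonneg _)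
      ⟨j, Finset.mem_univ j, by positivity⟩⟩

lemma conj_diff (U V : Matrix (Fin d) (Fin d) ℝ) (hU2 : Uᵀ * U = 1) (hV2 : Vᵀ * V = 1)
    (f g : Fin d → ℝ) :
    Uᵀ * ((U * diagonal f * Uᵀ) - (V * diagonal g * Vᵀ)) * V =
      diagonal f * (Uᵀ * V) - (Uᵀ * V) * diagonal g := by
  rw [Matrix.mul_sub, Matrix.sub_mul]
  congr 1
  · calc Uᵀ * (U * diagonal f * Uᵀ) * V = (Uᵀ * U) * diagonal f * (Uᵀ * V) := by noncomm_ring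
      _ = diagonal f * (Uᵀ * V) := by rw [hU2, Matrix.one_mul]
  · calc Uᵀ * (V * diagonal g * Vᵀ) * V = (Uᵀ * V) * diagonal g * (Vᵀ * V) := by noncomm_ring
      _ = (Uᵀ * V) * diagonal g := by rw [hV2, Matrix.mul_one]

lemma sumSq_diag_comm (Q : Matrix (Fin d) (Fin d) ℝ) (f g : Fin d → ℝ) :
    sumSq (diagonal f * Q - Q * diagonal g) = ∑ i, ∑ j, (Q i j)^2 * (f i - g j)^2 := by
  unfold sumSq
  refine Finset.sum_congr rfl fun i _ => Finset.sum_congr rfl fun j _ => ?_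
  rw [Matrix.sub_apply, Matrix.diagonal_mul, Matrix.mul_diagonal]
  ring

theorem stmt_8 {d : ℕ} [NeZero d] (X Y : Matrix (Fin d) (Fin d) ℝ) (lam : ℝ) (hlam : 0 < lam)
    (hX : X.IsHermitian) (hY : Y.IsHermitian) (hXY : X ≠ Y)
    (hPX : (Xᵀ * X + (4 / lam) • (1 : Matrix (Fin d) (Fin d) ℝ)).PosSemidef)
    (hPY : (Yᵀ * Y + (4 / lam) • (1 : Matrix (Fin d) (Fin d) ℝ)).PosSemidef) :
    frobNorm (hPX.sqrt - hPY.sqrt) ^ 2 / frobNorm (X - Y) ^ 2 ≤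
      sSup {r : ℝ | ∃ i j, hX.eigenvalues i ≠ hY.eigenvalues j ∧
        r = (Real.sqrt ((hX.eigenvalues i) ^ 2 + 4 / lam) -
              Real.sqrt ((hY.eigenvalues j) ^ 2 + 4 / lam)) ^ 2 /
            (hX.eigenvalues i - hY.eigenvalues j) ^ 2} := by
  have hc : (0:ℝ) ≤ 4 / lam := by positivity
  set a := hX.eigenvalues with ha
  set b := hY.eigenvalues with hb
  set U := (hX.eigenvectorUnitary : Matrix (Fin d) (Fin d) ℝ) with hU
  set V := (hY.eigenvectorUnitary : Matrix (Fin d) (Fin d) ℝ) with hV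
  have hU1 : U * Uᵀ = 1 := by
    rw [← star_coe_eq_transpose]; exact (Matrix.mem_unitaryGroup_iff).mp hX.eigenvectorUnitary.2
  have hU2 : Uᵀ * U = 1 := by
    rw [← star_coe_eq_transpose]; exact (Matrix.mem_unitaryGroup_iff').mp hX.eigenvectorUnitary.2
  have hV1 : V * Vᵀ = 1 := by
    rw [← star_coe_eq_transpose]; exact (Matrix.mem_unitaryGroup_iff).mp hY.eigenvectorUnitary.2
  have hV2 : Vᵀ * V = 1 := by
    rw [← star_coe_eq_transpose]; exact (Matrix.mem_unitaryGroup_iff').mp hY.eigenvectorUnitary.2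
  set Q := Uᵀ * V with hQ
  set F : Fin d → ℝ := fun i => Real.sqrt (a i ^ 2 + 4 / lam) with hF
  set G : Fin d → ℝ := fun j => Real.sqrt (b j ^ 2 + 4 / lam) with hG
  set Sset := {r : ℝ | ∃ i j, a i ≠ b j ∧ r = (F i - G j) ^ 2 / (a i - b j) ^ 2} with hSset
  set S := sSup Sset with hS
  -- boundedness and nonemptiness of the set
  have hfin : Sset.Finite := by
    apply (Set.finite_range (fun p : Fin d × Fin d => (F p.1 - G p.2) ^ 2 / (a p.1 - b p.2) ^ 2)).subset
    rintro r ⟨i, j, _, rfl⟩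
    exact ⟨(i, j), rfl⟩
  have hbdd : BddAbove Sset := hfin.bddAbove
  have hne : Sset.Nonempty := by
    by_contra hemp
    rw [Set.not_nonempty_iff_eq_empty] at hemp
    have hall : ∀ i j, a i = b j := by
      intro i j
      by_contra hij
      have hmem : ((F i - G j) ^ 2 / (a i - b j) ^ 2) ∈ Sset := ⟨i, j, hij, rfl⟩
      rw [hemp] at hmem
      exact Set.notMem_empty _ hmem
    let i0 : Fin d := ⟨0, Nat.pos_of_ne_zero (NeZero.ne d)⟩
    apply hXY
    have hXc : X = (b i0) • (1 : Matrix (Fin d) (Fin d) ℝ) := by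
      rw [spectral_real X hX]
      have : diagonal a = (b i0) • (1 : Matrix (Fin d) (Fin d) ℝ) := by
        rw [smul_one_eq_diagonal]
        have : a = fun _ => b i0 := funext fun i => hall i i0
        rw [this]
      rw [this, mul_smul_comm, Matrix.mul_one, smul_mul_assoc, hU1]
    have hYc : Y = (b i0) • (1 : Matrix (Fin d) (Fin d) ℝ) := by
      rw [spectral_real Y hY]
      have : diagonal b = (b i0) • (1 : Matrix (Fin d) (Fin d) ℝ) := by
        rw [smul_one_eq_diagonal]
        have : b = fun _ => b i0 := funext fun j => by rw [← hall i0 j, hall i0 i0]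
        rw [this]
      rw [this, mul_smul_comm, Matrix.mul_one, smul_mul_assoc, hV1]
    rw [hXc, hYc]
  have hS0 : 0 ≤ S := by
    obtain ⟨r, i, j, hij, hr⟩ := hne
    have : 0 ≤ r := by rw [hr]; positivity
    exact this.trans (le_csSup hbdd ⟨i, j, hij, hr⟩)
  -- rewrite the two norms
  have hsX : hPX.sqrt = U * diagonal F * Uᵀ := sqrt_diag X hX (4 / lam) hc hPX
  have hsY : hPY.sqrt = V * diagonal G * Vᵀ := sqrt_diag Y hY (4 / lam) hc hPY
  have hnum : frobNorm (hPX.sqrt - hPY.sqrt) ^ 2 = ∑ i, ∑ j, (Q i j)^2 * (F i - G j)^2 := by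
    rw [frobNorm_sq, hsX, hsY, ← sumSq_conj U V _ hU1 hV1, conj_diff U V hU2 hV2,
      sumSq_diag_comm]
  have hden : frobNorm (X - Y) ^ 2 = ∑ i, ∑ j, (Q i j)^2 * (a i - b j)^2 := by
    rw [frobNorm_sq]
    conv_lhs => rw [spectral_real X hX, spectral_real Y hY]
    rw [← sumSq_conj U V _ hU1 hV1, conj_diff U V hU2 hV2, sumSq_diag_comm]
  have hdpos : (0:ℝ) < frobNorm (X - Y) ^ 2 := by
    rw [frobNorm_sq]
    exact sumSq_pos _ (sub_ne_zero.mpr hXY)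
  rw [div_le_iff₀ hdpos, hnum, hden, Finset.mul_sum]
  apply Finset.sum_le_sum
  intro i _
  rw [Finset.mul_sum]
  apply Finset.sum_le_sum
  intro j _
  by_cases h : a i = b j
  · simp [hF, hG, h]
  · have hr : (F i - G j) ^ 2 / (a i - b j) ^ 2 ≤ S := le_csSup hbdd ⟨i, j, h, rfl⟩
    have hd : (0:ℝ) < (a i - b j) ^ 2 := by
      have := sub_ne_zero.mpr h; positivity
    have hkey : (F i - G j) ^ 2 ≤ S * (a i - b j) ^ 2 := (div_le_iff₀ hd).mp hr
    nlinarith [sq_nonneg (Q i j)]
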